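/- The function d_1(T_a,T_b) = ‖M(T_a) − M(T_b)‖₂, where M(T) is the vector of root-to-MRCA path lengths for all tip pairs together with all pendant branch lengths, is a metric on rooted binary trees on k labeled tips with positive branch lengths. -/

import Mathlib

/-- Rooted binary trees with tips labeled by `Fin k`; each internal node
stores the branch lengths of the edges to its two children. -/
inductive RTree (k : ℕ) : Type
  | leaf : Fin k → RTree k
  | node : ℝ → RTree k → ℝ → RTree k → RTree k

namespace RTree

variable {k : ℕ}

/-- The list of tip labels of a tree. -/
def tipList : RTree k → List (Fin k)
  | leaf i => [i]
  | node _ l _ r => l.tipList ++ r.tipList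

/-- The set of tip labels of a tree. -/
def tips (T : RTree k) : Finset (Fin k) := T.tipList.toFinset

/-- `T` is a phylogenetic tree on `k` labeled tips: each label occurs exactly once. -/
def IsPhylo (T : RTree k) : Prop := T.tipList.Nodup ∧ ∀ i : Fin k, i ∈ T.tipList

/-- All branch lengths are positive. -/
def PosLens : RTree k → Prop
  | leaf _ => True
  | node a l b r => 0 < a ∧ 0 < b ∧ PosLens l ∧ PosLens r

/-- All branch lengths are nonnegative. -/
def NonnegLens : RTree k → Prop
  | leaf _ => True
  | node a l b r => 0 ≤ a ∧ 0 ≤ b ∧ NonnegLens l ∧ NonnegLens r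

/-- All branch lengths are at most `ε`. -/
def LensLE (ε : ℝ) : RTree k → Prop
  | leaf _ => True
  | node a l b r => a ≤ ε ∧ b ≤ ε ∧ LensLE ε l ∧ LensLE ε r

/-- All branch lengths are equal to `1`. -/
def UnitLens : RTree k → Prop
  | leaf _ => True
  | node a l b r => a = 1 ∧ b = 1 ∧ UnitLens l ∧ UnitLens r

/-- `m T i j`: the number of edges on the path from the root to the
most recent common ancestor of tips `i` and `j`. -/
def m : RTree k → Fin k → Fin k → ℕ
  | leaf _, _, _ => 0
  | node _ l _ r, i, j =>
      if i ∈ l.tips ∧ j ∈ l.tips then m l i j + 1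
      else if i ∈ r.tips ∧ j ∈ r.tips then m r i j + 1
      else 0

/-- `Mlen T i j`: the sum of branch lengths on the path from the root to the
most recent common ancestor of tips `i` and `j`. -/
def Mlen : RTree k → Fin k → Fin k → ℝ
  | leaf _, _, _ => 0
  | node a l b r, i, j =>
      if i ∈ l.tips ∧ j ∈ l.tips then Mlen l i j + a
      else if i ∈ r.tips ∧ j ∈ r.tips then Mlen r i j + b
      else 0

/-- Whether the tree is a single leaf. -/
def isLeaf : RTree k → Bool
  | leaf _ => true
  | node _ _ _ _ => false

/-- `pend T i`: the length of the pendant edge leading to tip `i`. -/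
def pend : RTree k → Fin k → ℝ
  | leaf _, _ => 0
  | node a l b r, i =>
      if i ∈ l.tips then (if l.isLeaf then a else pend l i)
      else if i ∈ r.tips then (if r.isLeaf then b else pend r i)
      else 0

/-- The set of clades (tip sets of rooted subtrees) of a tree.  Two rooted
trees have the same topology iff they have the same set of clades, i.e. their
internal edges induce the same tip partitions. -/
def clades : RTree k → Set (Finset (Fin k))
  | leaf i => {{i}}
  | node a l b r => insert (node a l b r).tips (clades l ∪ clades r)

/-- Equality of rooted trees: same topology (ignoring the left/right order of
children) and equal corresponding branch lengths. -/
inductive TreeEq : RTree k → RTree k → Prop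
  | leaf (i : Fin k) : TreeEq (.leaf i) (.leaf i)
  | node {l l' r r' : RTree k} (a b : ℝ) :
      TreeEq l l' → TreeEq r r' → TreeEq (.node a l b r) (.node a l' b r')
  | swap {l l' r r' : RTree k} (a b : ℝ) :
      TreeEq l l' → TreeEq r r' → TreeEq (.node a l b r) (.node b r' a l')

/-- `S` is the rooted subtree of `T` hanging at a node at edge-depth `d`. -/
inductive SubtreeAt : RTree k → ℕ → RTree k → Prop
  | refl (T : RTree k) : SubtreeAt T 0 T
  | left {l S : RTree k} {d : ℕ} (a b : ℝ) (r : RTree k) :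
      SubtreeAt l d S → SubtreeAt (.node a l b r) (d + 1) S
  | right {r S : RTree k} {d : ℕ} (a b : ℝ) (l : RTree k) :
      SubtreeAt r d S → SubtreeAt (.node a l b r) (d + 1) S

/-- Relabel the tips of a tree by a permutation. -/
def relabel (σ : Equiv.Perm (Fin k)) : RTree k → RTree k
  | leaf i => leaf (σ i)
  | node a l b r => node a (relabel σ l) b (relabel σ r)

/-- The set of unordered pairs of distinct tips, represented by ordered pairs `(i, j)` with `i < j`. -/
def tipPairs (k : ℕ) : Finset (Fin k × Fin k) :=
  Finset.univ.filter (fun p => p.1 < p.2)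

/-- The `λ`-entry of the tree vector `v_λ(T)` at the pair `(i, j)`:
`(1 − λ) m_{i,j} + λ M_{i,j}`. -/
noncomputable def vPair (lam : ℝ) (T : RTree k) (i j : Fin k) : ℝ :=
  (1 - lam) * (T.m i j : ℝ) + lam * T.Mlen i j

/-- The `λ`-entry of the tree vector `v_λ(T)` at tip `i`: `(1 − λ) · 1 + λ p_i`. -/
noncomputable def vTip (lam : ℝ) (T : RTree k) (i : Fin k) : ℝ :=
  (1 - lam) * 1 + lam * T.pend i

/-- The metric `d_λ(T_a, T_b) = ‖v_λ(T_a) − v_λ(T_b)‖₂`. -/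
noncomputable def treeDist (lam : ℝ) (Ta Tb : RTree k) : ℝ :=
  Real.sqrt
    ((∑ p ∈ tipPairs k, (vPair lam Ta p.1 p.2 - vPair lam Tb p.1 p.2) ^ 2) +
      ∑ i : Fin k, (vTip lam Ta i - vTip lam Tb i) ^ 2)

/-- `‖m(T_a) − m(T_b)‖₂`, the Euclidean distance between the topology vectors
(the final `k` entries of `m` are all `1` and contribute nothing). -/
noncomputable def mDist (Ta Tb : RTree k) : ℝ :=
  Real.sqrt (∑ p ∈ tipPairs k, ((Ta.m p.1 p.2 : ℝ) - (Tb.m p.1 p.2 : ℝ)) ^ 2)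

/-- `‖M(T_a) − M(T_b)‖₂`, the Euclidean distance between the
branch-length vectors (root-to-MRCA path lengths and pendant lengths). -/
noncomputable def MDist (Ta Tb : RTree k) : ℝ :=
  Real.sqrt
    ((∑ p ∈ tipPairs k, (Ta.Mlen p.1 p.2 - Tb.Mlen p.1 p.2) ^ 2) +
      ∑ i : Fin k, (Ta.pend i - Tb.pend i) ^ 2)

/-- `D_λ(T_a,T_b) = (1−λ)‖m(T_a)−m(T_b)‖₂ + λ‖M(T_a)−M(T_b)‖₂`. -/
noncomputable def DDist (lam : ℝ) (Ta Tb : RTree k) : ℝ :=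
  (1 - lam) * mDist Ta Tb + lam * MDist Ta Tb

/-!
`T ↦ M(T)` maps trees into a Euclidean space and `d₁` is the pulled-back distance, so only
definiteness needs an argument: `M` determines the tree up to `TreeEq`. With positive branch
lengths, `M(i, j) > 0` exactly when `i` and `j` lie on the same side of the root, so `M` recovers
the root split, then the two root edges, and recursively the two subtrees.
-/

@[simp] lemma tips_leaf (i : Fin k) : (leaf i).tips = {i} := rfl

@[simp] lemma tips_node (a b : ℝ) (l r : RTree k) : (node a l b r).tips = l.tips ∪ r.tips := by
  simp [tips, tipList]

lemma tips_nonempty : ∀ T : RTree k, T.tips.Nonempty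
  | leaf i => by simp
  | node _ l _ _ => by simpa [Finset.union_nonempty] using Or.inl (tips_nonempty l)

lemma nodup_node_iff {a b : ℝ} {l r : RTree k} :
    (node a l b r).tipList.Nodup ↔
      l.tipList.Nodup ∧ r.tipList.Nodup ∧ Disjoint l.tips r.tips := by
  rw [tipList, List.nodup_append, tips, tips, List.disjoint_toFinset_iff_disjoint]
  exact and_congr_right' <| and_congr_right'
    ⟨fun h _ ha hb => h _ ha _ hb rfl, fun h _ ha _ hb hab => h ha (hab ▸ hb)⟩

lemma eq_leaf_of_tips_eq_singleton {T : RTree k} {i : Fin k} (hT : T.tipList.Nodup)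
    (h : T.tips = {i}) : T = leaf i := by
  cases T with
  | leaf j => simpa using h
  | node a l b r =>
    obtain ⟨-, -, hd⟩ := nodup_node_iff.1 hT
    obtain ⟨x, hx⟩ := l.tips_nonempty
    obtain ⟨y, hy⟩ := r.tips_nonempty
    have hxy : x = y := by
      have hx' : x ∈ (node a l b r).tips := by simp [hx]
      have hy' : y ∈ (node a l b r).tips := by simp [hy]
      rw [h, Finset.mem_singleton] at hx' hy'
      rw [hx', hy']
    exact absurd (hxy ▸ hy) (Finset.disjoint_left.1 hd hx)

lemma Mlen_comm : ∀ (T : RTree k) (i j : Fin k), T.Mlen i j = T.Mlen j i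
  | leaf _, _, _ => rfl
  | node a l b r, i, j => by
    simp only [Mlen, Mlen_comm l i j, Mlen_comm r i j, and_comm]

lemma Mlen_nonneg : ∀ {T : RTree k}, T.NonnegLens → ∀ i j, 0 ≤ T.Mlen i j
  | leaf _, _, _, _ => le_rfl
  | node _ _ _ _, ⟨ha, hb, hl, hr⟩, i, j => by
    rw [Mlen]
    split_ifs
    exacts [add_nonneg (Mlen_nonneg hl i j) ha, add_nonneg (Mlen_nonneg hr i j) hb, le_rfl]

lemma PosLens.nonnegLens : ∀ {T : RTree k}, T.PosLens → T.NonnegLens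
  | leaf _, _ => trivial
  | node _ _ _ _, ⟨ha, hb, hl, hr⟩ => ⟨ha.le, hb.le, hl.nonnegLens, hr.nonnegLens⟩

section Node

variable {a b : ℝ} {l r : RTree k} {i j : Fin k}

lemma Mlen_node_left (hi : i ∈ l.tips) (hj : j ∈ l.tips) :
    (node a l b r).Mlen i j = l.Mlen i j + a := by
  rw [Mlen, if_pos ⟨hi, hj⟩]

lemma Mlen_node_right (hd : Disjoint l.tips r.tips) (hi : i ∈ r.tips) (hj : j ∈ r.tips) :
    (node a l b r).Mlen i j = r.Mlen i j + b := by
  rw [Mlen, if_neg fun h => Finset.disjoint_left.1 hd h.1 hi, if_pos ⟨hi, hj⟩]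

lemma pend_node_left (hi : i ∈ l.tips) :
    (node a l b r).pend i = if l.isLeaf then a else l.pend i := by
  rw [pend, if_pos hi]

lemma pend_node_right (hd : Disjoint l.tips r.tips) (hi : i ∈ r.tips) :
    (node a l b r).pend i = if r.isLeaf then b else r.pend i := by
  rw [pend, if_neg fun h => Finset.disjoint_left.1 hd h hi, if_pos hi]

lemma exists_Mlen_node_eq_zero (hd : Disjoint l.tips r.tips) :
    ∃ i ∈ (node a l b r).tips, ∃ j ∈ (node a l b r).tips, i ≠ j ∧ (node a l b r).Mlen i j = 0 := by
  obtain ⟨i, hi⟩ := l.tips_nonempty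
  obtain ⟨j, hj⟩ := r.tips_nonempty
  have hir : i ∉ r.tips := Finset.disjoint_left.1 hd hi
  have hjl : j ∉ l.tips := fun h => Finset.disjoint_left.1 hd h hj
  refine ⟨i, by simp [hi], j, by simp [hj], fun h => hir (h ▸ hj), ?_⟩
  rw [Mlen, if_neg fun h => hjl h.2, if_neg fun h => hir h.1]

lemma Mlen_node_pos_iff (hT : (node a l b r).PosLens) :
    0 < (node a l b r).Mlen i j ↔ (i ∈ l.tips ∧ j ∈ l.tips) ∨ (i ∈ r.tips ∧ j ∈ r.tips) := by
  obtain ⟨ha, hb, hl, hr⟩ := hT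
  rw [Mlen]
  split_ifs with hL hR
  · simpa [hL] using add_pos_of_nonneg_of_pos (Mlen_nonneg hl.nonnegLens i j) ha
  · simpa [hR] using add_pos_of_nonneg_of_pos (Mlen_nonneg hr.nonnegLens i j) hb
  · simp [hL, hR]

end Node

lemma _root_.Finset.eq_of_sameBlock_iff_of_mem {α : Type*} [DecidableEq α]
    {A B A' B' : Finset α} {i₀ : α} (hAB : Disjoint A B) (hAB' : Disjoint A' B')
    (hU : A ∪ B = A' ∪ B')
    (hsame : ∀ i ∈ A ∪ B, ∀ j ∈ A ∪ B, i ≠ j →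
      ((i ∈ A ∧ j ∈ A) ∨ (i ∈ B ∧ j ∈ B) ↔ (i ∈ A' ∧ j ∈ A') ∨ (i ∈ B' ∧ j ∈ B')))
    (hi₀ : i₀ ∈ A) (hi₀' : i₀ ∈ A') : A = A' := by
  have hi₀B : i₀ ∉ B := Finset.disjoint_left.1 hAB hi₀
  have hi₀B' : i₀ ∉ B' := Finset.disjoint_left.1 hAB' hi₀'
  ext j
  rcases eq_or_ne i₀ j with rfl | hj
  · simp [hi₀, hi₀']
  have hsame₀ := hsame i₀ (Finset.mem_union_left _ hi₀) j
  constructor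
  · intro hjA
    simpa [hi₀, hi₀', hi₀B, hi₀B', hjA] using hsame₀ (Finset.mem_union_left _ hjA) hj
  · intro hjA'
    have hjU : j ∈ A ∪ B := hU ▸ Finset.mem_union_left _ hjA'
    simpa [hi₀, hi₀', hi₀B, hi₀B', hjA'] using hsame₀ hjU hj

lemma _root_.Finset.eq_or_eq_of_sameBlock_iff {α : Type*} [DecidableEq α]
    {A B A' B' : Finset α} (hAB : Disjoint A B) (hAB' : Disjoint A' B') (hU : A ∪ B = A' ∪ B')
    (hA : A.Nonempty)
    (hsame : ∀ i ∈ A ∪ B, ∀ j ∈ A ∪ B, i ≠ j →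
      ((i ∈ A ∧ j ∈ A) ∨ (i ∈ B ∧ j ∈ B) ↔ (i ∈ A' ∧ j ∈ A') ∨ (i ∈ B' ∧ j ∈ B'))) :
    A = A' ∨ A = B' := by
  obtain ⟨i₀, hi₀⟩ := hA
  rcases Finset.mem_union.1 (hU ▸ Finset.mem_union_left B hi₀) with hi₀' | hi₀'
  · exact .inl (Finset.eq_of_sameBlock_iff_of_mem hAB hAB' hU hsame hi₀ hi₀')
  · exact .inr (Finset.eq_of_sameBlock_iff_of_mem hAB hAB'.symm (hU.trans (Finset.union_comm _ _))
      (fun i hi j hj hij => (hsame i hi j hj hij).trans or_comm) hi₀ hi₀')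

lemma TreeEq.refl : ∀ T : RTree k, TreeEq T T
  | RTree.leaf i => .leaf i
  | RTree.node a l b r => .node a b (.refl l) (.refl r)

lemma TreeEq.tips_eq {T T' : RTree k} (h : TreeEq T T') : T.tips = T'.tips := by
  induction h with
  | leaf i => rfl
  | node a b _ _ ihl ihr => simp [ihl, ihr]
  | swap a b _ _ ihl ihr => simp [ihl, ihr, Finset.union_comm]

lemma TreeEq.isLeaf_eq {T T' : RTree k} (h : TreeEq T T') : T.isLeaf = T'.isLeaf := by
  cases h <;> rfl

lemma TreeEq.Mlen_eq {T T' : RTree k} (h : TreeEq T T') (hT : T.tipList.Nodup) (i j : Fin k) :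
    T.Mlen i j = T'.Mlen i j := by
  induction h generalizing i j with
  | leaf => rfl
  | node a b hl hr ihl ihr =>
    obtain ⟨nl, nr, -⟩ := nodup_node_iff.1 hT
    rw [Mlen, Mlen, ← hl.tips_eq, ← hr.tips_eq, ihl nl, ihr nr]
  | swap a b hl hr ihl ihr =>
    obtain ⟨nl, nr, hd⟩ := nodup_node_iff.1 hT
    rw [Mlen, Mlen, ← hl.tips_eq, ← hr.tips_eq, ihl nl, ihr nr]
    exact ite_ite_comm _ _ _ _ fun hL hR => Finset.disjoint_left.1 hd hL.1 hR.1

lemma TreeEq.pend_eq {T T' : RTree k} (h : TreeEq T T') (hT : T.tipList.Nodup) (i : Fin k) :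
    T.pend i = T'.pend i := by
  induction h generalizing i with
  | leaf => rfl
  | node a b hl hr ihl ihr =>
    obtain ⟨nl, nr, -⟩ := nodup_node_iff.1 hT
    rw [pend, pend, ← hl.tips_eq, ← hr.tips_eq, ← hl.isLeaf_eq, ← hr.isLeaf_eq, ihl nl, ihr nr]
  | swap a b hl hr ihl ihr =>
    obtain ⟨nl, nr, hd⟩ := nodup_node_iff.1 hT
    rw [pend, pend, ← hl.tips_eq, ← hr.tips_eq, ← hl.isLeaf_eq, ← hr.isLeaf_eq, ihl nl, ihr nr]
    exact ite_ite_comm _ _ _ _ fun hL hR => Finset.disjoint_left.1 hd hL hR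

/-- Agreement of `M` restricted to the tips of `T`: unlike equality of the full vectors, it passes
to subtrees. -/
def MAgree (T T' : RTree k) : Prop :=
  T.tips = T'.tips ∧ (∀ i ∈ T.tips, ∀ j ∈ T.tips, i ≠ j → T.Mlen i j = T'.Mlen i j) ∧
    ∀ i ∈ T.tips, T.pend i = T'.pend i

lemma MAgree.refl (T : RTree k) : MAgree T T :=
  ⟨rfl, fun _ _ _ _ _ => rfl, fun _ _ => rfl⟩

lemma MAgree.trans {T T' T'' : RTree k} (h : MAgree T T') (h' : MAgree T' T'') :
    MAgree T T'' := by
  obtain ⟨ht, hM, hp⟩ := h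
  obtain ⟨ht', hM', hp'⟩ := h'
  refine ⟨ht.trans ht', fun i hi j hj hij => ?_, fun i hi => ?_⟩
  · exact (hM i hi j hj hij).trans (hM' i (ht ▸ hi) j (ht ▸ hj) hij)
  · exact (hp i hi).trans (hp' i (ht ▸ hi))

lemma TreeEq.mAgree {T T' : RTree k} (h : TreeEq T T') (hT : T.tipList.Nodup) : MAgree T T' :=
  ⟨h.tips_eq, fun i _ j _ _ => h.Mlen_eq hT i j, fun i _ => h.pend_eq hT i⟩

/-- If `s` is a leaf, `c` is its pendant length. Otherwise `c` is the value of `s.Mlen + c` at a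
pair of tips whose MRCA is the root of `s`, hence `c ≥ c'` as `s'.Mlen ≥ 0`; and symmetrically. -/
lemma edge_eq_and_mAgree {c c' : ℝ} {s s' : RTree k} (hs : s.tipList.Nodup)
    (hs' : s'.tipList.Nodup) (ps : s.NonnegLens) (ps' : s'.NonnegLens) (hts : s.tips = s'.tips)
    (hM : ∀ i ∈ s.tips, ∀ j ∈ s.tips, i ≠ j → s.Mlen i j + c = s'.Mlen i j + c')
    (hp : ∀ i ∈ s.tips,
      (if s.isLeaf then c else s.pend i) = if s'.isLeaf then c' else s'.pend i) :
    c = c' ∧ MAgree s s' := by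
  cases s with
  | leaf i =>
    obtain rfl : s' = leaf i := eq_leaf_of_tips_eq_singleton hs' hts.symm
    exact ⟨by simpa [isLeaf] using hp i (by simp), MAgree.refl _⟩
  | node a₁ l₁ b₁ r₁ =>
    cases s' with
    | leaf i => exact absurd (eq_leaf_of_tips_eq_singleton hs hts) nofun
    | node a₂ l₂ b₂ r₂ =>
      obtain ⟨i, hi, j, hj, hij, h₀⟩ :=
        exists_Mlen_node_eq_zero (a := a₁) (b := b₁) (nodup_node_iff.1 hs).2.2
      obtain ⟨i', hi', j', hj', hij', h₀'⟩ :=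
        exists_Mlen_node_eq_zero (a := a₂) (b := b₂) (nodup_node_iff.1 hs').2.2
      have h₁ := hM i hi j hj hij
      have h₂ := hM i' (hts ▸ hi') j' (hts ▸ hj') hij'
      obtain rfl : c = c' := by linarith [Mlen_nonneg ps' i j, Mlen_nonneg ps i' j']
      exact ⟨rfl, hts, fun i hi j hj hij => add_right_cancel (hM i hi j hj hij),
        by simpa [isLeaf] using hp⟩

lemma MAgree.node_children {a b a' b' : ℝ} {l r l' r' : RTree k}
    (hT : (node a l b r).tipList.Nodup) (hT' : (node a' l' b' r').tipList.Nodup)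
    (pT : (node a l b r).NonnegLens) (pT' : (node a' l' b' r').NonnegLens)
    (h : MAgree (node a l b r) (node a' l' b' r')) (hl : l.tips = l'.tips) :
    a = a' ∧ b = b' ∧ MAgree l l' ∧ MAgree r r' := by
  obtain ⟨nl, nr, hd⟩ := nodup_node_iff.1 hT
  obtain ⟨nl', nr', hd'⟩ := nodup_node_iff.1 hT'
  obtain ⟨-, -, pl, pr⟩ := pT
  obtain ⟨-, -, pl', pr'⟩ := pT'
  obtain ⟨htips, hM, hp⟩ := h
  have hr : r.tips = r'.tips := by
    rw [← Finset.union_sdiff_cancel_left hd, ← Finset.union_sdiff_cancel_left hd',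
      ← tips_node a b, ← tips_node a' b', htips, hl]
  have memL : ∀ {i}, i ∈ l.tips → i ∈ (node a l b r).tips := fun hi => by simp [hi]
  have memR : ∀ {i}, i ∈ r.tips → i ∈ (node a l b r).tips := fun hi => by simp [hi]
  obtain ⟨rfl, hll'⟩ := edge_eq_and_mAgree nl nl' pl pl' hl
    (fun i hi j hj hij => by
      rw [← Mlen_node_left (b := b) (r := r) hi hj,
        ← Mlen_node_left (b := b') (r := r') (hl ▸ hi) (hl ▸ hj)]
      exact hM i (memL hi) j (memL hj) hij)
    (fun i hi => by
      rw [← pend_node_left (b := b) (r := r) hi, ← pend_node_left (b := b') (r := r') (hl ▸ hi)]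
      exact hp i (memL hi))
  obtain ⟨rfl, hrr'⟩ := edge_eq_and_mAgree nr nr' pr pr' hr
    (fun i hi j hj hij => by
      rw [← Mlen_node_right (a := a) hd hi hj, ← Mlen_node_right (a := a) hd' (hr ▸ hi) (hr ▸ hj)]
      exact hM i (memR hi) j (memR hj) hij)
    (fun i hi => by
      rw [← pend_node_right (a := a) hd hi, ← pend_node_right (a := a) hd' (hr ▸ hi)]
      exact hp i (memR hi))
  exact ⟨rfl, rfl, hll', hrr'⟩

theorem treeEq_of_mAgree : ∀ {T T' : RTree k}, T.tipList.Nodup → T'.tipList.Nodup →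
    T.PosLens → T'.PosLens → MAgree T T' → TreeEq T T'
  | leaf i, _, _, hT', _, _, h => by
    obtain rfl := eq_leaf_of_tips_eq_singleton hT' h.1.symm
    exact .leaf i
  | node _ _ _ _, leaf _, hT, _, _, _, h => absurd (eq_leaf_of_tips_eq_singleton hT h.1) nofun
  | node a l b r, node a' l' b' r', hT, hT', pT, pT', h => by
    obtain ⟨nl, nr, hd⟩ := nodup_node_iff.1 hT
    obtain ⟨nl', nr', hd'⟩ := nodup_node_iff.1 hT'
    obtain ⟨-, -, pl, pr⟩ := id pT
    obtain ⟨ha', hb', pl', pr'⟩ := id pT'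
    have hsides : l.tips = l'.tips ∨ l.tips = r'.tips := by
      refine Finset.eq_or_eq_of_sameBlock_iff hd hd' (by simpa using h.1) l.tips_nonempty
        fun i hi j hj hij => ?_
      rw [← Mlen_node_pos_iff pT, ← Mlen_node_pos_iff pT',
        h.2.1 i (by simpa using hi) j (by simpa using hj) hij]
    rcases hsides with hl | hl
    · obtain ⟨rfl, rfl, hll', hrr'⟩ :=
        h.node_children hT hT' pT.nonnegLens pT'.nonnegLens hl
      exact .node a b (treeEq_of_mAgree nl nl' pl pl' hll') (treeEq_of_mAgree nr nr' pr pr' hrr')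
    · have hswap : TreeEq (node a' l' b' r') (node b' r' a' l') := .swap a' b' (.refl l') (.refl r')
      obtain ⟨rfl, rfl, hlr', hrl'⟩ := (h.trans (hswap.mAgree hT')).node_children hT
        (nodup_node_iff.2 ⟨nr', nl', hd'.symm⟩) pT.nonnegLens
        (PosLens.nonnegLens ⟨hb', ha', pr', pl'⟩) hl
      exact .swap a b (treeEq_of_mAgree nl nr' pl pr' hlr') (treeEq_of_mAgree nr nl' pr pl' hrl')

noncomputable def Mvec (T : RTree k) : EuclideanSpace ℝ (tipPairs k ⊕ Fin k) :=
  WithLp.toLp 2 (Sum.elim (fun p => T.Mlen p.1.1 p.1.2) T.pend)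

lemma MDist_eq_dist (Ta Tb : RTree k) : MDist Ta Tb = dist (Mvec Ta) (Mvec Tb) := by
  rw [MDist, EuclideanSpace.dist_eq, Fintype.sum_sum_type, ← Finset.sum_coe_sort (tipPairs k)]
  simp [Mvec, Real.dist_eq, sq_abs]

lemma Mvec_eq_iff {Ta Tb : RTree k} : Mvec Ta = Mvec Tb ↔
    (∀ i j, i ≠ j → Ta.Mlen i j = Tb.Mlen i j) ∧ ∀ i, Ta.pend i = Tb.pend i := by
  constructor
  · intro h
    have hcoord := congrFun (congrArg WithLp.ofLp h)
    refine ⟨fun i j hij => ?_, fun i => by simpa [Mvec] using hcoord (.inr i)⟩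
    rcases hij.lt_or_gt with hij | hij
    · simpa [Mvec] using hcoord (.inl ⟨(i, j), by simp [tipPairs, hij]⟩)
    · rw [Mlen_comm Ta, Mlen_comm Tb]
      simpa [Mvec] using hcoord (.inl ⟨(j, i), by simp [tipPairs, hij]⟩)
  · rintro ⟨hM, hp⟩
    ext (⟨p, hp'⟩ | i)
    · simpa [Mvec] using hM p.1 p.2 (by simp [tipPairs] at hp'; exact hp'.ne)
    · simpa [Mvec] using hp i

theorem treeEq_iff_Mvec_eq {Ta Tb : RTree k} (ha : Ta.IsPhylo) (hb : Tb.IsPhylo)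
    (pa : Ta.PosLens) (pb : Tb.PosLens) : TreeEq Ta Tb ↔ Mvec Ta = Mvec Tb := by
  have htips : ∀ {T : RTree k}, T.IsPhylo → T.tips = Finset.univ := fun hT =>
    Finset.eq_univ_of_forall fun i => List.mem_toFinset.2 (hT.2 i)
  rw [Mvec_eq_iff]
  refine ⟨fun h => ⟨fun i j _ => h.Mlen_eq ha.1 i j, h.pend_eq ha.1⟩, fun ⟨hM, hp⟩ => ?_⟩
  exact treeEq_of_mAgree ha.1 hb.1 pa pb
    ⟨(htips ha).trans (htips hb).symm, fun i _ j _ hij => hM i j hij, fun i _ => hp i⟩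

end RTree
open RTree in
/-- `d₁(T_a,T_b) = ‖M(T_a) − M(T_b)‖₂` is a metric on rooted
binary trees on `k` labeled tips with positive branch lengths. -/
theorem MDist_is_metric {k : ℕ} :
    (∀ Ta Tb : RTree k, Ta.IsPhylo → Tb.IsPhylo → Ta.PosLens → Tb.PosLens →
      0 ≤ MDist Ta Tb) ∧
    (∀ Ta Tb : RTree k, Ta.IsPhylo → Tb.IsPhylo → Ta.PosLens → Tb.PosLens →
      (MDist Ta Tb = 0 ↔ TreeEq Ta Tb)) ∧
    (∀ Ta Tb : RTree k, Ta.IsPhylo → Tb.IsPhylo → Ta.PosLens → Tb.PosLens →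
      MDist Ta Tb = MDist Tb Ta) ∧
    (∀ Ta Tb Tc : RTree k, Ta.IsPhylo → Tb.IsPhylo → Tc.IsPhylo →
      Ta.PosLens → Tb.PosLens → Tc.PosLens →
      MDist Ta Tb ≤ MDist Ta Tc + MDist Tc Tb) := by
  refine ⟨fun _ _ _ _ _ _ => Real.sqrt_nonneg _, fun Ta Tb ha hb pa pb => ?_,
    fun Ta Tb _ _ _ _ => ?_, fun Ta Tb Tc _ _ _ _ _ _ => ?_⟩
  · rw [MDist_eq_dist, dist_eq_zero, treeEq_iff_Mvec_eq ha hb pa pb]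
  · rw [MDist_eq_dist, MDist_eq_dist, dist_comm]
  · simpa only [MDist_eq_dist] using dist_triangle (Mvec Ta) (Mvec Tc) (Mvec Tb)
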